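/- arXiv:1703.02643 — 2 statements merged into one kernel-verified Lean document; each statement's English description precedes it below -/
import Mathlib

section
/- If P is a closed subset of Cantor space of positive measure and has the density property with respect to sequences (m_i), (ℓ_i), then P has the extension property with respect to (m_i), (ℓ_i). -/
open MeasureTheory

abbrev Cantor : Type := ℕ → Bool

/-- The first `n` bits of `X` as a binary string. -/
def pre (X : Cantor) (n : ℕ) : List Bool := (List.range n).map X

/-- The cylinder of all infinite extensions of the string `σ`. -/
def cyl (σ : List Bool) : Set Cantor := {X | pre X σ.length = σ}

/-- The open set generated by a set of strings. -/
def opn (S : Set (List Bool)) : Set Cantor := ⋃ σ ∈ S, cyl σ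

/-- `μ` is the uniform (Lebesgue) measure on Cantor space. -/
def UniformMeasure (μ : Measure Cantor) : Prop :=
  ∀ σ : List Bool, μ (cyl σ) = (2 : ENNReal)⁻¹ ^ σ.length

/-- A computably enumerable set of binary strings. -/
def CEStrings (A : Set (List Bool)) : Prop :=
  ∃ f : List Bool → ℕ → Bool, Computable₂ f ∧ A = {σ | ∃ s, f σ s = true}

/-- A `Π⁰₁` class: an effectively closed subset of Cantor space, i.e. the
complement of the open set generated by a c.e. set of strings. -/
def Pi01 (P : Set Cantor) : Prop := ∃ W, CEStrings W ∧ P = (opn W)ᶜ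

/-- Partial sums: `psum ℓ n = ∑_{i<n} ℓ i`. -/
def psum (ℓ : ℕ → ℕ) (n : ℕ) : ℕ := ∑ i ∈ Finset.range n, ℓ i

/-- `P` has the extension property w.r.t. `(m_i)`, `(ℓ_i)`: every `P`-extendible
string of length `L_i` has at least `2^{m_i}` `P`-extendible extensions of
length `L_{i+1}`. -/
def ExtensionProperty (P : Set Cantor) (m ℓ : ℕ → ℕ) : Prop :=
  ∀ i : ℕ, ∀ σ : List Bool, σ.length = psum ℓ i → (cyl σ ∩ P).Nonempty →
    ∃ S : Finset (List Bool), 2 ^ m i ≤ S.card ∧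
      ∀ τ ∈ S, τ.length = psum ℓ (i + 1) ∧ σ <+: τ ∧ (cyl τ ∩ P).Nonempty

/-- `P` has the density property w.r.t. `(m_i)`, `(ℓ_i)`: every `P`-extendible
string of length `L_n` has `P`-density at least `2^{m_n - ℓ_n}`. -/
def DensityProperty (μ : Measure Cantor) (P : Set Cantor) (m ℓ : ℕ → ℕ) : Prop :=
  ∀ n : ℕ, ∀ σ : List Bool, σ.length = psum ℓ n → (cyl σ ∩ P).Nonempty →
    (2 : ENNReal) ^ ((m n : ℝ) - (ℓ n : ℝ)) ≤ 2 ^ σ.length * μ (cyl σ ∩ P)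

/-!
The cylinders of the `P`-extendible extensions of `σ` of length `L_{n+1}` cover `[σ] ∩ P`,
and each has measure `2^{-L_{n+1}}`. So if there are `c` of them, the density property gives
`2^{m_n - ℓ_n} ≤ 2^{L_n} · c · 2^{-L_{n+1}} = c · 2^{-ℓ_n}`, that is `2^{m_n} ≤ c`.
-/

lemma length_pre (X : Cantor) (n : ℕ) : (pre X n).length = n := by simp [pre]

lemma take_pre (X : Cantor) {a b : ℕ} (h : a ≤ b) : (pre X b).take a = pre X a := by
  simp [pre, ← List.map_take, List.take_range, h]

lemma mem_cyl_pre (X : Cantor) (n : ℕ) : X ∈ cyl (pre X n) := by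
  simp [cyl, length_pre]

lemma prefix_pre_of_mem_cyl {X : Cantor} {σ : List Bool} (hX : X ∈ cyl σ) {n : ℕ}
    (h : σ.length ≤ n) : σ <+: pre X n := by
  have hσ : (pre X n).take σ.length = σ := (take_pre X h).trans hX
  exact hσ ▸ List.take_prefix _ _

lemma psum_succ (ℓ : ℕ → ℕ) (n : ℕ) : psum ℓ (n + 1) = psum ℓ n + ℓ n :=
  Finset.sum_range_succ ℓ n

lemma measure_le_card_mul_of_subset_biUnion_cyl {μ : Measure Cantor} (hμ : UniformMeasure μ)
    {A : Set Cantor} {S : Finset (List Bool)} {N : ℕ} (hS : ∀ τ ∈ S, τ.length = N)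
    (hA : A ⊆ ⋃ τ ∈ S, cyl τ) : μ A ≤ S.card * (2 : ENNReal)⁻¹ ^ N :=
  calc μ A ≤ μ (⋃ τ ∈ S, cyl τ) := measure_mono hA
    _ ≤ ∑ τ ∈ S, μ (cyl τ) := measure_biUnion_finset_le _ _
    _ = ∑ _τ ∈ S, (2 : ENNReal)⁻¹ ^ N :=
        Finset.sum_congr rfl fun τ hτ => by rw [hμ τ, hS τ hτ]
    _ = S.card * (2 : ENNReal)⁻¹ ^ N := by rw [Finset.sum_const, nsmul_eq_mul]

def extendibleExtensions (P : Set Cantor) (σ : List Bool) (N : ℕ) : Set (List Bool) :=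
  {τ | τ.length = N ∧ σ <+: τ ∧ (cyl τ ∩ P).Nonempty}

lemma extendibleExtensions_finite (P : Set Cantor) (σ : List Bool) (N : ℕ) :
    (extendibleExtensions P σ N).Finite :=
  (List.finite_length_eq Bool N).subset fun _ hτ => hτ.1

lemma cyl_inter_subset_biUnion_extendibleExtensions (P : Set Cantor) {σ : List Bool} {N : ℕ}
    (h : σ.length ≤ N) :
    cyl σ ∩ P ⊆ ⋃ τ ∈ (extendibleExtensions_finite P σ N).toFinset, cyl τ := by
  intro X hX
  have hmem : pre X N ∈ extendibleExtensions P σ N :=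
    ⟨length_pre X N, prefix_pre_of_mem_cyl hX.1 h, X, mem_cyl_pre X N, hX.2⟩
  exact Set.mem_biUnion ((Set.Finite.mem_toFinset _).2 hmem) (mem_cyl_pre X N)

lemma measure_cyl_inter_le_card_extendibleExtensions {μ : Measure Cantor}
    (hμ : UniformMeasure μ) (P : Set Cantor) {σ : List Bool} {N : ℕ} (h : σ.length ≤ N) :
    μ (cyl σ ∩ P) ≤ (extendibleExtensions_finite P σ N).toFinset.card * (2 : ENNReal)⁻¹ ^ N :=
  measure_le_card_mul_of_subset_biUnion_cyl hμ
    (fun _ hτ => ((Set.Finite.mem_toFinset _).1 hτ).1)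
    (cyl_inter_subset_biUnion_extendibleExtensions P h)

lemma two_pow_le_of_two_rpow_sub_le {m ℓ L c : ℕ}
    (h : (2 : ENNReal) ^ ((m : ℝ) - ℓ) ≤ 2 ^ L * (c * (2 : ENNReal)⁻¹ ^ (L + ℓ))) :
    2 ^ m ≤ c := by
  have hlhs : (2 : ENNReal) ^ ((m : ℝ) - ℓ) = 2 ^ m * (2 : ENNReal)⁻¹ ^ ℓ := by
    rw [ENNReal.rpow_sub _ _ two_ne_zero ENNReal.ofNat_ne_top, ENNReal.rpow_natCast,
      ENNReal.rpow_natCast, div_eq_mul_inv, ENNReal.inv_pow]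
  have hrhs : (2 : ENNReal) ^ L * (c * (2 : ENNReal)⁻¹ ^ (L + ℓ)) = c * (2 : ENNReal)⁻¹ ^ ℓ := by
    have hcancel : (2 : ENNReal) ^ L * (2 : ENNReal)⁻¹ ^ L = 1 := by
      rw [← mul_pow, ENNReal.mul_inv_cancel two_ne_zero ENNReal.ofNat_ne_top, one_pow]
    calc (2 : ENNReal) ^ L * (c * (2 : ENNReal)⁻¹ ^ (L + ℓ))
        = c * (2 ^ L * (2 : ENNReal)⁻¹ ^ L) * (2 : ENNReal)⁻¹ ^ ℓ := by rw [pow_add]; ring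
      _ = c * (2 : ENNReal)⁻¹ ^ ℓ := by rw [hcancel, mul_one]
  rw [hlhs, hrhs] at h
  have hcast : ((2 ^ m : ℕ) : ENNReal) ≤ c := by
    push_cast
    exact (ENNReal.mul_le_mul_iff_left (pow_ne_zero _ (by simp))
      (ENNReal.pow_ne_top (by simp))).1 h
  exact_mod_cast hcast

theorem stmt5_general (μ : Measure Cantor) (hμ : UniformMeasure μ)
    (P : Set Cantor) (m ℓ : ℕ → ℕ)
    (hdens : DensityProperty μ P m ℓ) : ExtensionProperty P m ℓ := by
  intro i σ hlen hne
  have hle : σ.length ≤ psum ℓ (i + 1) := by rw [hlen, psum_succ]; omega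
  have hfin := extendibleExtensions_finite P σ (psum ℓ (i + 1))
  refine ⟨hfin.toFinset, ?_, fun τ hτ => hfin.mem_toFinset.1 hτ⟩
  apply two_pow_le_of_two_rpow_sub_le (L := psum ℓ i)
  calc (2 : ENNReal) ^ ((m i : ℝ) - ℓ i) ≤ 2 ^ σ.length * μ (cyl σ ∩ P) := hdens i σ hlen hne
    _ ≤ _ := by
      rw [hlen, ← psum_succ]
      gcongr
      exact measure_cyl_inter_le_card_extendibleExtensions hμ P (hlen ▸ hle)

/-- If `P` is a closed subset of Cantor space of positive measure which has the
density property w.r.t. `(m_i)`, `(ℓ_i)`, then `P` has the extension property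
w.r.t. `(m_i)`, `(ℓ_i)`. -/
theorem stmt5 (μ : Measure Cantor) (hμ : UniformMeasure μ)
    (P : Set Cantor) (hP : IsClosed P) (hpos : 0 < μ P) (m ℓ : ℕ → ℕ)
    (hdens : DensityProperty μ P m ℓ) : ExtensionProperty P m ℓ :=
  stmt5_general μ hμ P m ℓ hdens
end

section
/- Let (m_i), (ℓ_i) be sequences of positive integers, M_n = Σ_{i<n} m_i, L_n = Σ_{i<n} ℓ_i, and let h_r be a nondecreasing function satisfying m_s + Σ_{i≤s}(ℓ_i − m_i) ≤ h_r(M_s) for all s. Then for every s and every n ∈ [M_s, M_{s+1}), we have L_{s+1} ≤ n + h_r(n). -/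
open Finset

theorem stmt15_general (m ℓ : ℕ → ℕ) (hmℓ : ∀ i, m i ≤ ℓ i)
    (hr : ℕ → ℕ) (hrmono : Monotone hr)
    (h : ∀ s : ℕ, m s + ∑ i ∈ Finset.range (s + 1), (ℓ i - m i) ≤
      hr (∑ i ∈ Finset.range s, m i)) :
    ∀ s n : ℕ, (∑ i ∈ Finset.range s, m i) ≤ n → n < (∑ i ∈ Finset.range (s + 1), m i) →
      (∑ i ∈ Finset.range (s + 1), ℓ i) ≤ n + hr n := by
  intro s n hMn _
  have hsplit : ∑ i ∈ range (s + 1), ℓ i =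
      ∑ i ∈ range s, m i + (m s + ∑ i ∈ range (s + 1), (ℓ i - m i)) := by
    rw [← add_assoc, ← sum_range_succ, ← sum_add_distrib]
    exact sum_congr rfl fun i _ => (add_tsub_cancel_of_le (hmℓ i)).symm
  rw [hsplit]
  exact add_le_add hMn ((h s).trans (hrmono hMn))

/-- If `h_r` is nondecreasing and `m_s + Σ_{i≤s}(ℓ_i − m_i) ≤ h_r(M_s)` for all `s`,
where `M_n = Σ_{i<n} m_i` and `L_n = Σ_{i<n} ℓ_i`, then for every `s` and every
`n ∈ [M_s, M_{s+1})` we have `L_{s+1} ≤ n + h_r(n)`. -/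
theorem stmt15 (m ℓ : ℕ → ℕ) (hm : ∀ i, 1 ≤ m i) (hmℓ : ∀ i, m i ≤ ℓ i)
    (hr : ℕ → ℕ) (hrmono : Monotone hr)
    (h : ∀ s : ℕ, m s + ∑ i ∈ Finset.range (s + 1), (ℓ i - m i) ≤
      hr (∑ i ∈ Finset.range s, m i)) :
    ∀ s n : ℕ, (∑ i ∈ Finset.range s, m i) ≤ n → n < (∑ i ∈ Finset.range (s + 1), m i) →
      (∑ i ∈ Finset.range (s + 1), ℓ i) ≤ n + hr n :=
  stmt15_general m ℓ hmℓ hr hrmono h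
end
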